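/- Let d ≥ 2 be an integer and let (a_n)_{n∈ℕ} be a strictly decreasing sequence of positive reals converging to 0. If updim_θ({a_n : n ∈ ℕ}) → 0 as θ → 0⁺, then updim_θ(C^d({a_n})) → d - 1 as θ → 0⁺; likewise, if lodim_θ({a_n : n ∈ ℕ}) → 0 as θ → 0⁺, then lodim_θ(C^d({a_n})) → d - 1 as θ → 0⁺. (That is, if the intermediate dimensions of {a_n} are continuous at zero, then so are those of C^d({a_n}), whose Hausdorff dimension is d - 1.) -/

import Mathlib

open Set Metric Filter

/-- The upper θ-intermediate dimension of a set `E` in a metric space: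
the infimum of all `s ≥ 0` such that for every `ε > 0` there is `δ₀ > 0` such that for all
`0 < δ < δ₀` there is a countable cover `𝒰` of `E` with `δ ≤ diam U ≤ δ ^ θ` for all `U ∈ 𝒰`
and `∑_{U ∈ 𝒰} (diam U) ^ s ≤ ε`. -/
noncomputable def updim {X : Type*} [PseudoMetricSpace X] (θ : ℝ) (E : Set X) : ℝ :=
  sInf {s : ℝ | 0 ≤ s ∧ ∀ ε : ℝ, 0 < ε → ∃ δ₀ : ℝ, 0 < δ₀ ∧ ∀ δ : ℝ, 0 < δ → δ < δ₀ →
    ∃ 𝒰 : Set (Set X), 𝒰.Countable ∧ E ⊆ ⋃₀ 𝒰 ∧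
      (∀ U ∈ 𝒰, δ ≤ diam U ∧ diam U ≤ δ ^ θ) ∧
      ∑' U : 𝒰, ENNReal.ofReal (diam (U : Set X) ^ s) ≤ ENNReal.ofReal ε}

/-- The lower θ-intermediate dimension of a set `E` in a metric space. -/
noncomputable def lodim {X : Type*} [PseudoMetricSpace X] (θ : ℝ) (E : Set X) : ℝ :=
  sInf {s : ℝ | 0 ≤ s ∧ ∀ ε : ℝ, 0 < ε → ∀ δ₀ : ℝ, 0 < δ₀ → ∃ δ : ℝ, 0 < δ ∧ δ < δ₀ ∧
    ∃ 𝒰 : Set (Set X), 𝒰.Countable ∧ E ⊆ ⋃₀ 𝒰 ∧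
      (∀ U ∈ 𝒰, δ ≤ diam U ∧ diam U ≤ δ ^ θ) ∧
      ∑' U : 𝒰, ENNReal.ofReal (diam (U : Set X) ^ s) ≤ ENNReal.ofReal ε}

/-- `C^d({a_n})`: the union over `n` of the spheres in `ℝ^d` of radius `a n` centred at
the origin. -/
noncomputable def concentricSeq (d : ℕ) (a : ℕ → ℝ) : Set (EuclideanSpace ℝ (Fin d)) :=
  {x | ∃ n : ℕ, ‖x‖ = a n}

/-!
Write `d = n + 1` and `A = range a ⊆ [0, a 0]`. Both intermediate dimensions of `C^d({a_m})` lie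
in `[n, n + dim_θ A]` for `θ ∈ (0, 1]`, which gives the theorem.

Lower bound: dropping the last coordinate maps the sphere of radius `a 0` onto the `n`-ball of
that radius without increasing diameters, so comparing `n`-dimensional volumes, every cover of the
sphere by sets of diameter at most `1` has `∑ |U| ^ s ≥ ∑ |U| ^ n ≥ (a 0) ^ n` when `s ≤ n`.

Upper bound: given a cover of `A` by sets `U` of diameter `u ∈ [δ, δ ^ θ]`, cover each shell
`{x | ‖x‖ ∈ U ∩ A}` by the balls circumscribing the cubes of the grid of side `u / √d` that meet
it. These disjoint cubes of volume `(u / √d) ^ d` lie in a shell of width `4 u` and radius at most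
`a 0 + 2`, of volume `O(u)`, so there are `O(u ^ (1 - d))` of them. An `s`-cover of `A` of cost `ε`
thus becomes a `(d - 1 + s)`-cover of `C^d({a_m})` of cost `O(ε)` at the same scales.
-/

open Function MeasureTheory Bornology Topology
open scoped ENNReal

theorem Metric.isBounded_of_diam_pos {X : Type*} [PseudoMetricSpace X] {S : Set X}
    (h : 0 < diam S) : IsBounded S :=
  of_not_not fun hS ↦ h.ne' (diam_eq_zero_of_unbounded hS)

section IntermediateCover

variable {X : Type*} [PseudoMetricSpace X]

def HasIntermediateCover (θ s δ ε : ℝ) (E : Set X) : Prop :=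
  ∃ 𝒰 : Set (Set X), 𝒰.Countable ∧ E ⊆ ⋃₀ 𝒰 ∧
    (∀ U ∈ 𝒰, δ ≤ diam U ∧ diam U ≤ δ ^ θ) ∧
    ∑' U : 𝒰, ENNReal.ofReal (diam (U : Set X) ^ s) ≤ ENNReal.ofReal ε

theorem HasIntermediateCover.mono {θ s δ ε : ℝ} {E F : Set X}
    (h : HasIntermediateCover θ s δ ε F) (hEF : E ⊆ F) : HasIntermediateCover θ s δ ε E :=
  let ⟨𝒰, hc, hcov, hdiam, hsum⟩ := h
  ⟨𝒰, hc, hEF.trans hcov, hdiam, hsum⟩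

theorem HasIntermediateCover.of_iUnion {ι : Type*} [Countable ι] {θ s δ ε : ℝ} {E : Set X}
    {G : ι → Set X} (hcov : E ⊆ ⋃ i, G i) (hdiam : ∀ i, δ ≤ diam (G i) ∧ diam (G i) ≤ δ ^ θ)
    (hsum : ∑' i, ENNReal.ofReal (diam (G i) ^ s) ≤ ENNReal.ofReal ε) :
    HasIntermediateCover θ s δ ε E :=
  ⟨range G, countable_range G, by rwa [sUnion_range], forall_mem_range.2 hdiam,
    (ENNReal.tsum_le_tsum_comp_of_surjective rangeFactorization_surjective
      fun V ↦ ENNReal.ofReal (diam V.1 ^ s)).trans hsum⟩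

theorem updim_eq_sInf (θ : ℝ) (E : Set X) :
    updim θ E = sInf {s | 0 ≤ s ∧ ∀ ε, 0 < ε → ∀ᶠ δ in 𝓝[>] 0,
      HasIntermediateCover θ s δ ε E} := by
  simp only [updim, HasIntermediateCover, (nhdsGT_basis (0 : ℝ)).eventually_iff, mem_Ioo, and_imp]

theorem lodim_eq_sInf (θ : ℝ) (E : Set X) :
    lodim θ E = sInf {s | 0 ≤ s ∧ ∀ ε, 0 < ε → ∃ᶠ δ in 𝓝[>] 0,
      HasIntermediateCover θ s δ ε E} := by
  simp only [lodim, HasIntermediateCover, (nhdsGT_basis (0 : ℝ)).frequently_iff, mem_Ioo, and_assoc]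

end IntermediateCover

theorem le_csInf_and_csInf_le_add {S T : Set ℝ} {c : ℝ} (hS : S.Nonempty)
    (hST : ∀ s ∈ S, c + s ∈ T) (hT : ∀ t ∈ T, c ≤ t) : c ≤ sInf T ∧ sInf T ≤ c + sInf S := by
  obtain ⟨s₀, hs₀⟩ := hS
  refine ⟨le_csInf ⟨_, hST s₀ hs₀⟩ hT, ?_⟩
  have : sInf T - c ≤ sInf S := le_csInf ⟨s₀, hs₀⟩ fun s hs ↦
    sub_le_iff_le_add'.2 (csInf_le ⟨c, hT⟩ (hST s hs))
  linarith

section HaarDiam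

variable {E : Type*} [NormedAddCommGroup E] [NormedSpace ℝ E] [MeasurableSpace E] [BorelSpace E]
  [FiniteDimensional ℝ E] (μ : Measure E) [μ.IsAddHaarMeasure]

theorem addHaar_le_ofReal_diam_pow {S : Set E} (hS : IsBounded S) :
    μ S ≤ ENNReal.ofReal (diam S ^ Module.finrank ℝ E) * μ (closedBall 0 1) := by
  rcases S.eq_empty_or_nonempty with rfl | ⟨x, hx⟩
  · simp
  calc μ S ≤ μ (closedBall x (diam S)) := measure_mono fun y hy ↦ dist_le_diam_of_mem hS hy hx
    _ = _ := Measure.addHaar_closedBall' μ x diam_nonneg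

end HaarDiam

section SphereLowerBound

variable {n : ℕ}

def dropLast (x : EuclideanSpace ℝ (Fin (n + 1))) : EuclideanSpace ℝ (Fin n) :=
  WithLp.toLp 2 (Fin.init x.ofLp)

theorem lipschitzWith_dropLast : LipschitzWith 1 (dropLast (n := n)) := by
  refine LipschitzWith.of_dist_le_mul fun x y ↦ ?_
  rw [NNReal.coe_one, one_mul, EuclideanSpace.dist_eq, EuclideanSpace.dist_eq]
  refine Real.sqrt_le_sqrt ?_
  rw [Fin.sum_univ_castSucc (fun i ↦ dist (x i) (y i) ^ 2)]
  exact le_add_of_nonneg_right (sq_nonneg _)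

theorem closedBall_subset_image_dropLast_sphere {r : ℝ} (hr : 0 ≤ r) :
    closedBall 0 r ⊆ dropLast '' sphere (0 : EuclideanSpace ℝ (Fin (n + 1))) r := by
  intro y hy
  have hy : ‖y‖ ^ 2 ≤ r ^ 2 := pow_le_pow_left₀ (norm_nonneg y) (mem_closedBall_zero_iff.1 hy) 2
  refine ⟨WithLp.toLp 2 (Fin.snoc y.ofLp √(r ^ 2 - ‖y‖ ^ 2)), ?_, ?_⟩
  · rw [mem_sphere_zero_iff_norm, ← sq_eq_sq₀ (norm_nonneg _) hr,
      EuclideanSpace.real_norm_sq_eq, Fin.sum_univ_castSucc]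
    simp only [Fin.snoc_castSucc, Fin.snoc_last, Real.sq_sqrt (sub_nonneg.2 hy),
      ← EuclideanSpace.real_norm_sq_eq]
    ring
  · simp [dropLast]

theorem ofReal_pow_le_tsum_diam_pow {r : ℝ} (hr : 0 ≤ r)
    {𝒰 : Set (Set (EuclideanSpace ℝ (Fin (n + 1))))} (h𝒰 : 𝒰.Countable)
    (hcov : sphere 0 r ⊆ ⋃₀ 𝒰) (hbdd : ∀ U ∈ 𝒰, IsBounded U) :
    ENNReal.ofReal (r ^ n) ≤ ∑' U : 𝒰, ENNReal.ofReal (diam U.1 ^ n) := by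
  have := h𝒰.to_subtype
  set V := volume (closedBall (0 : EuclideanSpace ℝ (Fin n)) 1)
  have hball : closedBall 0 r ⊆ ⋃ U : 𝒰, dropLast '' U.1 := by
    refine (closedBall_subset_image_dropLast_sphere hr).trans ?_
    rw [← image_iUnion, ← sUnion_eq_iUnion]
    exact image_mono hcov
  have hdiam (U : 𝒰) : diam (dropLast '' U.1) ≤ diam U.1 := by
    simpa using lipschitzWith_dropLast.diam_image_le _ (hbdd U U.2)
  have hV₀ : V ≠ 0 := (measure_closedBall_pos _ _ one_pos).ne'
  refine (ENNReal.mul_le_mul_iff_left hV₀ measure_closedBall_lt_top.ne).1 ?_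
  calc ENNReal.ofReal (r ^ n) * V = volume (closedBall (0 : EuclideanSpace ℝ (Fin n)) r) := by
        rw [Measure.addHaar_closedBall' volume _ hr, finrank_euclideanSpace_fin]
    _ ≤ ∑' U : 𝒰, volume (dropLast '' U.1) := (measure_mono hball).trans (measure_iUnion_le _)
    _ ≤ ∑' U : 𝒰, ENNReal.ofReal (diam U.1 ^ n) * V := by
        refine ENNReal.tsum_le_tsum fun U ↦ ?_
        have := addHaar_le_ofReal_diam_pow volume
          (lipschitzWith_dropLast.isBounded_image (hbdd U U.2))
        rw [finrank_euclideanSpace_fin] at this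
        refine this.trans (mul_le_mul_left (ENNReal.ofReal_le_ofReal ?_) _)
        exact pow_le_pow_left₀ diam_nonneg (hdiam U) n
    _ = (∑' U : 𝒰, ENNReal.ofReal (diam U.1 ^ n)) * V := ENNReal.tsum_mul_right

end SphereLowerBound

theorem pow_le_of_hasIntermediateCover_sphere {n : ℕ} {θ s δ ε r : ℝ} (hθ : 0 ≤ θ)
    (hδ : δ ∈ Ioo 0 1) (hs : s ≤ n) (hr : 0 ≤ r) (hε : 0 ≤ ε)
    (h : HasIntermediateCover θ s δ ε (sphere (0 : EuclideanSpace ℝ (Fin (n + 1))) r)) :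
    r ^ n ≤ ε := by
  obtain ⟨𝒰, h𝒰, hcov, hdiam, hsum⟩ := h
  have hpos (U) (hU : U ∈ 𝒰) : 0 < diam U := hδ.1.trans_le (hdiam U hU).1
  have hle (U) (hU : U ∈ 𝒰) : diam U ^ (n : ℝ) ≤ diam U ^ s :=
    Real.rpow_le_rpow_of_exponent_ge (hpos U hU)
      ((hdiam U hU).2.trans (Real.rpow_le_one hδ.1.le hδ.2.le hθ)) hs
  rw [← ENNReal.ofReal_le_ofReal_iff hε]
  calc ENNReal.ofReal (r ^ n)
      ≤ ∑' U : 𝒰, ENNReal.ofReal (diam U.1 ^ n) :=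
        ofReal_pow_le_tsum_diam_pow hr h𝒰 hcov fun U hU ↦ isBounded_of_diam_pos (hpos U hU)
    _ ≤ ∑' U : 𝒰, ENNReal.ofReal (diam U.1 ^ s) := ENNReal.tsum_le_tsum fun U ↦
        ENNReal.ofReal_le_ofReal (by simpa using hle U U.2)
    _ ≤ ENNReal.ofReal ε := hsum

section GridCubes

variable {ι : Type*}

noncomputable def gridCube (h : ℝ) (k : ι → ℤ) : Set (EuclideanSpace ℝ ι) :=
  WithLp.ofLp ⁻¹' univ.pi fun i ↦ Ico (k i * h) ((k i + 1) * h)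

noncomputable def gridCenter (h : ℝ) (k : ι → ℤ) : EuclideanSpace ℝ ι :=
  WithLp.toLp 2 fun i ↦ (k i + 1 / 2) * h

theorem mem_gridCube_iff {h : ℝ} (hh : 0 < h) {k : ι → ℤ} {x : EuclideanSpace ℝ ι} :
    x ∈ gridCube h k ↔ k = fun i ↦ ⌊x i / h⌋ := by
  simp only [gridCube, mem_preimage, mem_univ_pi, mem_Ico, funext_iff, eq_comm (a := k _),
    Int.floor_eq_iff, le_div_iff₀ hh, div_lt_iff₀ hh]

theorem pairwise_disjoint_gridCube {h : ℝ} (hh : 0 < h) :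
    Pairwise (Disjoint on (gridCube h : (ι → ℤ) → Set (EuclideanSpace ℝ ι))) := fun _ _ hkk' ↦
  disjoint_left.2 fun _ hx hx' ↦
    hkk' (((mem_gridCube_iff hh).1 hx).trans ((mem_gridCube_iff hh).1 hx').symm)

variable [Fintype ι]

theorem measurableSet_gridCube (h : ℝ) (k : ι → ℤ) : MeasurableSet (gridCube h k) :=
  (MeasurableSet.univ_pi fun _ ↦ measurableSet_Ico).preimage
    (PiLp.volume_preserving_ofLp ι).measurable

theorem volume_gridCube {h : ℝ} (hh : 0 ≤ h) (k : ι → ℤ) :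
    volume (gridCube h k) = ENNReal.ofReal (h ^ Fintype.card ι) := by
  rw [gridCube, (PiLp.volume_preserving_ofLp ι).measure_preimage
    (MeasurableSet.univ_pi fun _ ↦ measurableSet_Ico).nullMeasurableSet, Real.volume_pi_Ico]
  simp [add_mul, ENNReal.ofReal_pow hh]

theorem gridCube_subset_closedBall {h : ℝ} (hh : 0 ≤ h) (k : ι → ℤ) :
    gridCube h k ⊆ closedBall (gridCenter h k) (√(Fintype.card ι) * h / 2) := by
  intro x hx
  have hx : ∀ i, |x i - (k i + 1 / 2) * h| ≤ h / 2 := fun i ↦ by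
    obtain ⟨h₁, h₂⟩ := (mem_univ_pi.1 hx) i
    rw [abs_le]; constructor <;> linarith
  rw [mem_closedBall, EuclideanSpace.dist_eq]
  calc √(∑ i, dist (x i) (gridCenter h k i) ^ 2) ≤ √(∑ _i : ι, (h / 2) ^ 2) :=
        Real.sqrt_le_sqrt <| Finset.sum_le_sum fun i _ ↦
          pow_le_pow_left₀ dist_nonneg (by simpa [gridCenter, Real.dist_eq] using hx i) 2
    _ = √(Fintype.card ι) * h / 2 := by
        rw [Finset.sum_const, Finset.card_univ, nsmul_eq_mul, Real.sqrt_mul (Nat.cast_nonneg _),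
          Real.sqrt_sq (by positivity)]
        ring

end GridCubes

theorem pow_le_pow_add_of_sub_le {a b w : ℝ} (hb : 0 ≤ b) (hab : b ≤ a) (hw : a - b ≤ w) (d : ℕ) :
    a ^ d ≤ b ^ d + d * w * a ^ (d - 1) := by
  have := abs_pow_sub_pow_le a b d
  rw [abs_of_nonneg (sub_nonneg.2 hab), abs_of_nonneg (hb.trans hab), abs_of_nonneg hb,
    max_eq_left hab] at this
  have : (a - b) * d * a ^ (d - 1) ≤ w * d * a ^ (d - 1) := by
    gcongr
    exact pow_nonneg (hb.trans hab) _
  linarith [le_abs_self (a ^ d - b ^ d)]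

section Shell

variable {E : Type*} [NormedAddCommGroup E] [NormedSpace ℝ E] [MeasurableSpace E] [BorelSpace E]
  [FiniteDimensional ℝ E] [Nontrivial E] (μ : Measure E) [μ.IsAddHaarMeasure]

theorem addHaar_shell_le {r w : ℝ} (hr : 0 ≤ r) (hw : 0 ≤ w) :
    μ {x | |‖x‖ - r| ≤ w} ≤ ENNReal.ofReal
      (2 * Module.finrank ℝ E * w * (r + w) ^ (Module.finrank ℝ E - 1)) * μ (ball 0 1) := by
  set b := max (r - w) 0
  have hsub : {x : E | |‖x‖ - r| ≤ w} ⊆ closedBall 0 (r + w) \ ball 0 b := fun x hx ↦ by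
    simp only [mem_ofPred_eq, abs_le] at hx
    simp only [Set.mem_sdiff, mem_closedBall_zero_iff, mem_ball_zero_iff, b, lt_max_iff, not_or,
      not_lt]
    exact ⟨by linarith, by linarith, norm_nonneg x⟩
  refine (measure_mono hsub).trans <| (measure_sdiff_le_iff_le_add
    measurableSet_ball.nullMeasurableSet (ball_subset_closedBall.trans
      (closedBall_subset_closedBall (max_le (by linarith) (by positivity))))
    measure_ball_lt_top.ne).2 ?_
  rw [Measure.addHaar_closedBall μ _ (by positivity), Measure.addHaar_ball μ _ (le_max_right _ _),
    ← add_mul, ← ENNReal.ofReal_add (by positivity) (by positivity)]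
  gcongr
  have := pow_le_pow_add_of_sub_le (le_max_right (r - w) 0) (max_le (by linarith) (by positivity))
    (show r + w - b ≤ 2 * w by simp only [b]; linarith [le_max_left (r - w) 0])
    (Module.finrank ℝ E)
  linarith

end Shell

section ShellCover

variable {ι : Type*} [Fintype ι] [Nonempty ι]

theorem tsum_ofReal_gridCube_le {T : Set ℝ} {R u : ℝ} (hT : T ⊆ Icc 0 R) (hTu : diam T ≤ u)
    (hu : 0 < u) (hu₁ : u ≤ 1) :
    ∑' _k : {k : ι → ℤ | ∃ x ∈ gridCube (u / √(Fintype.card ι)) k, ‖x‖ ∈ T},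
      ENNReal.ofReal ((u / √(Fintype.card ι)) ^ Fintype.card ι) ≤
    ENNReal.ofReal (4 * Fintype.card ι * u * (R + 2) ^ (Fintype.card ι - 1)) *
      volume (ball (0 : EuclideanSpace ℝ ι) 1) := by
  set d := Fintype.card ι
  set h := u / √d
  set K := {k : ι → ℤ | ∃ x ∈ gridCube h k, ‖x‖ ∈ T}
  have hd : 0 < √(d : ℝ) := Real.sqrt_pos.2 (Nat.cast_pos.2 Fintype.card_pos)
  have hh : 0 < h := div_pos hu hd
  have hrad : √d * h = u := mul_div_cancel₀ u hd.ne'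
  rcases K.eq_empty_or_nonempty with hK | ⟨-, x₀, -, hx₀⟩
  · simp [hK]
  have hshell : ∀ k ∈ K, gridCube h k ⊆ {y | |‖y‖ - ‖x₀‖| ≤ 2 * u} := by
    rintro k ⟨x, hx, hxT⟩ y hy
    have hcube := gridCube_subset_closedBall hh.le k
    rw [hrad] at hcube
    have hyx : dist y x ≤ u := (dist_triangle_right y x _).trans (by
      linarith [mem_closedBall.1 (hcube hy), mem_closedBall.1 (hcube hx)])
    have hxx₀ : dist ‖x‖ ‖x₀‖ ≤ u :=
      (dist_le_diam_of_mem ((isBounded_Icc 0 R).subset hT) hxT hx₀).trans hTu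
    rw [mem_ofPred_eq, ← Real.dist_eq]
    linarith [dist_triangle ‖y‖ ‖x‖ ‖x₀‖, (dist_norm_norm_le y x).trans_eq (dist_eq_norm y x).symm]
  have hx₀R : ‖x₀‖ ≤ R := (hT hx₀).2
  calc ∑' _k : K, ENNReal.ofReal (h ^ d) = ∑' k : K, volume (gridCube h k.1) := by
        simp only [volume_gridCube hh.le, d]
    _ ≤ volume (⋃ k : K, gridCube h k.1) := tsum_meas_le_meas_iUnion_of_disjoint _
        (fun k ↦ measurableSet_gridCube h k.1)
        ((pairwise_disjoint_gridCube hh).comp_of_injective Subtype.val_injective)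
    _ ≤ volume {y : EuclideanSpace ℝ ι | |‖y‖ - ‖x₀‖| ≤ 2 * u} :=
        measure_mono (iUnion_subset fun k ↦ hshell k k.2)
    _ ≤ _ := by
        refine (addHaar_shell_le volume (norm_nonneg x₀) (by positivity)).trans ?_
        rw [finrank_euclideanSpace, show 2 * (d : ℝ) * (2 * u) = 4 * d * u by ring]
        gcongr
        linarith

variable (ι) in
noncomputable def shellCoverConst (R : ℝ) : ℝ :=
  4 * Fintype.card ι * √(Fintype.card ι) ^ Fintype.card ι * (R + 2) ^ (Fintype.card ι - 1) *
    (volume (ball (0 : EuclideanSpace ℝ ι) 1)).toReal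

theorem shellCoverConst_pos {R : ℝ} (hR : 0 ≤ R) : 0 < shellCoverConst ι R := by
  have := Fintype.card_pos (α := ι)
  have := ENNReal.toReal_pos (measure_ball_pos volume (0 : EuclideanSpace ℝ ι) one_pos).ne'
    measure_ball_lt_top.ne
  unfold shellCoverConst
  positivity

theorem tsum_ofReal_rpow_le_shellCoverConst {T : Set ℝ} {R u : ℝ} (s : ℝ) (hT : T ⊆ Icc 0 R)
    (hTu : diam T ≤ u) (hu : 0 < u) (hu₁ : u ≤ 1) :
    ∑' _k : {k : ι → ℤ | ∃ x ∈ gridCube (u / √(Fintype.card ι)) k, ‖x‖ ∈ T},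
      ENNReal.ofReal (u ^ ((Fintype.card ι : ℝ) - 1 + s)) ≤
    ENNReal.ofReal (shellCoverConst ι R * u ^ s) := by
  set d := Fintype.card ι
  have hd : 0 < √(d : ℝ) := Real.sqrt_pos.2 (Nat.cast_pos.2 Fintype.card_pos)
  have hsplit : u ^ ((d : ℝ) - 1 + s) = (u / √d) ^ d * (√d ^ d * u ^ (s - 1)) := by
    rw [div_pow, div_mul_eq_mul_div, mul_div_assoc, mul_div_cancel_left₀ _ (pow_pos hd d).ne',
      ← Real.rpow_natCast, ← Real.rpow_add hu]
    ring_nf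
  have hV := (measure_ball_lt_top (μ := volume) (x := (0 : EuclideanSpace ℝ ι)) (r := 1)).ne
  calc _ = (∑' _k : {k : ι → ℤ | ∃ x ∈ gridCube (u / √d) k, ‖x‖ ∈ T},
        ENNReal.ofReal ((u / √d) ^ d)) * ENNReal.ofReal (√d ^ d * u ^ (s - 1)) := by
        simp only [hsplit, ENNReal.ofReal_mul (by positivity : (0 : ℝ) ≤ (u / √d) ^ d),
          ENNReal.tsum_mul_right]
    _ ≤ ENNReal.ofReal (4 * d * u * (R + 2) ^ (d - 1)) * volume (ball (0 : EuclideanSpace ℝ ι) 1) *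
        ENNReal.ofReal (√d ^ d * u ^ (s - 1)) := by
        gcongr
        exact tsum_ofReal_gridCube_le hT hTu hu hu₁
    _ = ENNReal.ofReal (shellCoverConst ι R * u ^ s) := by
        rw [← ENNReal.ofReal_toReal hV, ← ENNReal.ofReal_mul' ENNReal.toReal_nonneg,
          ← ENNReal.ofReal_mul' (by positivity), shellCoverConst, Real.rpow_sub_one hu.ne']
        congr 1
        field_simp
        ring

end ShellCover

theorem HasIntermediateCover.norm_preimage {ι : Type*} [Fintype ι] [Nonempty ι] {A : Set ℝ}
    {R θ s δ ε : ℝ} (h : HasIntermediateCover θ s δ ε A) (hA : A ⊆ Icc 0 R) (hR : 0 ≤ R)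
    (hθ : 0 ≤ θ) (hδ : δ ∈ Ioo 0 1) :
    HasIntermediateCover θ (Fintype.card ι - 1 + s) δ (shellCoverConst ι R * ε)
      {x : EuclideanSpace ℝ ι | ‖x‖ ∈ A} := by
  obtain ⟨𝒰, h𝒰, hcov, hdiam, hsum⟩ := h
  have := h𝒰.to_subtype
  set d := Fintype.card ι
  have hd : 0 < √(d : ℝ) := Real.sqrt_pos.2 (Nat.cast_pos.2 Fintype.card_pos)
  have hpos (U : 𝒰) : 0 < diam U.1 := hδ.1.trans_le (hdiam U U.2).1
  have hle (U : 𝒰) : diam U.1 ≤ 1 := (hdiam U U.2).2.trans (Real.rpow_le_one hδ.1.le hδ.2.le hθ)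
  let K (U : 𝒰) : Set (ι → ℤ) := {k | ∃ x ∈ gridCube (diam U.1 / √d) k, ‖x‖ ∈ U.1 ∩ A}
  let G (p : Σ U : 𝒰, K U) : Set (EuclideanSpace ℝ ι) :=
    closedBall (gridCenter (diam p.1.1 / √d) p.2.1) (diam p.1.1 / 2)
  have hG (p : Σ U : 𝒰, K U) : diam (G p) = diam p.1.1 := by
    rw [diam_closedBall_eq _ (by linarith [hpos p.1])]
    ring
  refine .of_iUnion (G := G) (fun x hx ↦ ?_) (fun p ↦ hG p ▸ hdiam _ p.1.2) ?_
  · obtain ⟨U, hU, hxU⟩ := hcov hx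
    have hx' : x ∈ gridCube (diam U / √d) fun i ↦ ⌊x i / (diam U / √d)⌋ :=
      (mem_gridCube_iff (div_pos (hpos ⟨U, hU⟩) hd)).2 rfl
    refine mem_iUnion.2 ⟨⟨⟨U, hU⟩, _, x, hx', hxU, hx⟩, ?_⟩
    have := gridCube_subset_closedBall (div_pos (hpos ⟨U, hU⟩) hd).le _ hx'
    rwa [mul_div_cancel₀ _ hd.ne'] at this
  · calc ∑' p, ENNReal.ofReal (diam (G p) ^ ((d : ℝ) - 1 + s))
        = ∑' U : 𝒰, ∑' _k : K U, ENNReal.ofReal (diam U.1 ^ ((d : ℝ) - 1 + s)) := by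
          rw [ENNReal.tsum_sigma']
          simp only [hG]
      _ ≤ ∑' U : 𝒰, ENNReal.ofReal (shellCoverConst ι R * diam U.1 ^ s) :=
          ENNReal.tsum_le_tsum fun U ↦ tsum_ofReal_rpow_le_shellCoverConst s
            (inter_subset_right.trans hA)
            (diam_mono inter_subset_left (isBounded_of_diam_pos (hpos U))) (hpos U) (hle U)
      _ = ENNReal.ofReal (shellCoverConst ι R) * ∑' U : 𝒰, ENNReal.ofReal (diam U.1 ^ s) := by
          simp only [ENNReal.ofReal_mul (shellCoverConst_pos hR).le, ENNReal.tsum_mul_left]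
      _ ≤ ENNReal.ofReal (shellCoverConst ι R * ε) := by
          rw [ENNReal.ofReal_mul (shellCoverConst_pos hR).le]
          gcongr

-- Needed only because `sInf ∅ = 0`: without an admissible exponent for `A`, its dimensions
-- would vanish and the upper bound `n + dim_θ A` would fail.
theorem hasIntermediateCover_Icc {R θ δ ε : ℝ} (hR : 0 ≤ R) (hθ : θ ≤ 1) (hδ : δ ∈ Ioo 0 1)
    (hδε : δ * (R + 1) ≤ ε) : HasIntermediateCover θ 2 δ ε (Icc 0 R) := by
  let G (k : Fin (⌊R / δ⌋₊ + 1)) : Set ℝ := Icc (k * δ) (k * δ + δ)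
  have hG (k) : diam (G k) = δ := by simp [G, Real.diam_Icc, hδ.1.le]
  refine .of_iUnion (G := G) (fun x hx ↦ ?_) (fun k ↦ ?_) ?_
  · have hk : ⌊x / δ⌋₊ < ⌊R / δ⌋₊ + 1 :=
      Nat.lt_succ_of_le (Nat.floor_le_floor (div_le_div_of_nonneg_right hx.2 hδ.1.le))
    refine mem_iUnion.2 ⟨⟨_, hk⟩, ?_, ?_⟩
    · simpa [le_div_iff₀ hδ.1] using Nat.floor_le (div_nonneg hx.1 hδ.1.le)
    · have := (div_le_iff₀ hδ.1).1 (Nat.lt_floor_add_one (x / δ)).le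
      linarith
  · rw [hG]
    exact ⟨le_rfl, by simpa using Real.rpow_le_rpow_of_exponent_ge hδ.1 hδ.2.le hθ⟩
  · calc ∑' k, ENNReal.ofReal (diam (G k) ^ (2 : ℝ))
        = ((⌊R / δ⌋₊ + 1 : ℕ) : ℝ≥0∞) * ENNReal.ofReal (δ ^ 2) := by
          simp [hG, ENNReal.ofReal_pow hδ.1.le]
      _ = ENNReal.ofReal ((⌊R / δ⌋₊ + 1 : ℕ) * δ ^ 2) := by
          rw [ENNReal.ofReal_mul (by positivity), ENNReal.ofReal_natCast]
      _ ≤ ENNReal.ofReal ε := by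
          refine ENNReal.ofReal_le_ofReal (le_trans ?_ hδε)
          push_cast
          have := Nat.floor_le (div_nonneg hR hδ.1.le)
          have : (⌊R / δ⌋₊ : ℝ) * δ ≤ R := by rwa [le_div_iff₀ hδ.1] at this
          nlinarith [hδ.1, hδ.2]

theorem eventually_hasIntermediateCover_Icc {R θ ε : ℝ} (hR : 0 ≤ R) (hθ : θ ≤ 1) (hε : 0 < ε) :
    ∀ᶠ δ in 𝓝[>] 0, HasIntermediateCover θ 2 δ ε (Icc 0 R) := by
  filter_upwards [Ioo_mem_nhdsGT (lt_min one_pos (div_pos hε (by linarith : 0 < R + 1)))]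
    with δ ⟨hδ₀, hδ⟩
  refine hasIntermediateCover_Icc hR hθ ⟨hδ₀, hδ.trans_le (min_le_left _ _)⟩ ?_
  exact (le_div_iff₀ (by linarith)).1 (hδ.le.trans (min_le_right _ _))

theorem tendsto_of_eventually_mem_Icc_add {α : Type*} {l : Filter α} {f g : α → ℝ} {c : ℝ}
    (hf : ∀ᶠ x in l, f x ∈ Icc c (c + g x)) (hg : Tendsto g l (𝓝 0)) : Tendsto f l (𝓝 c) :=
  tendsto_of_tendsto_of_tendsto_of_le_of_le' tendsto_const_nhds (by simpa using hg.const_add c)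
    (hf.mono fun _ h ↦ h.1) (hf.mono fun _ h ↦ h.2)

section ConcentricSpheres

variable {n : ℕ} {a : ℕ → ℝ}

theorem concentricSeq_eq_norm_preimage (d : ℕ) :
    concentricSeq d a = {x | ‖x‖ ∈ range a} := by
  ext
  simp [concentricSeq, eq_comm]

theorem sphere_subset_concentricSeq (d : ℕ) (m : ℕ) :
    sphere (0 : EuclideanSpace ℝ (Fin d)) (a m) ⊆ concentricSeq d a :=
  fun _ hx ↦ ⟨m, mem_sphere_zero_iff_norm.1 hx⟩

variable (hapos : ∀ m, 0 < a m) {θ s δ ε : ℝ}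
include hapos

theorem range_subset_Icc (ha : Antitone a) : range a ⊆ Icc 0 (a 0) := by
  rintro _ ⟨m, rfl⟩
  exact ⟨(hapos m).le, ha (Nat.zero_le m)⟩

theorem HasIntermediateCover.concentricSeq (ha : Antitone a) (hθ₀ : 0 ≤ θ) (hδ : δ ∈ Ioo 0 1)
    (h : HasIntermediateCover θ s δ (ε / shellCoverConst (Fin (n + 1)) (a 0)) (range a)) :
    HasIntermediateCover θ (n + s) δ ε (concentricSeq (n + 1) a) := by
  have hC := shellCoverConst_pos (ι := Fin (n + 1)) (hapos 0).le
  simpa [concentricSeq_eq_norm_preimage, mul_div_cancel₀ _ hC.ne'] using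
    h.norm_preimage (ι := Fin (n + 1)) (range_subset_Icc hapos ha) (hapos 0).le hθ₀ hδ

theorem le_of_hasIntermediateCover_concentricSeq (hθ₀ : 0 ≤ θ) (hδ : δ ∈ Ioo 0 1)
    (h : HasIntermediateCover θ s δ (a 0 ^ n / 2) (concentricSeq (n + 1) a)) : n ≤ s := by
  by_contra! hs
  have := pow_le_of_hasIntermediateCover_sphere hθ₀ hδ hs.le (hapos 0).le
    (half_pos (pow_pos (hapos 0) n)).le (h.mono (sphere_subset_concentricSeq _ 0))
  linarith [pow_pos (hapos 0) n]

theorem updim_concentricSeq_mem_Icc (ha : Antitone a) (hθ₀ : 0 ≤ θ) (hθ₁ : θ ≤ 1) :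
    updim θ (concentricSeq (n + 1) a) ∈ Icc (n : ℝ) (n + updim θ (range a)) := by
  have hC := shellCoverConst_pos (ι := Fin (n + 1)) (hapos 0).le
  have hδ : ∀ᶠ δ in 𝓝[>] (0 : ℝ), δ ∈ Ioo 0 1 := Ioo_mem_nhdsGT one_pos
  rw [updim_eq_sInf, updim_eq_sInf]
  refine le_csInf_and_csInf_le_add ⟨2, zero_le_two, fun ε hε ↦ ?_⟩
    (fun s ⟨hs, h⟩ ↦ ⟨by positivity, fun ε hε ↦ ?_⟩) fun s ⟨_, h⟩ ↦ ?_
  · filter_upwards [eventually_hasIntermediateCover_Icc (hapos 0).le hθ₁ hε] with δ hcov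
    exact hcov.mono (range_subset_Icc hapos ha)
  · filter_upwards [h _ (div_pos hε hC), hδ] with δ hcov hδ
    exact hcov.concentricSeq hapos ha hθ₀ hδ
  · obtain ⟨δ, hcov, hδ⟩ := (h _ (half_pos (pow_pos (hapos 0) n))).and hδ |>.exists
    exact le_of_hasIntermediateCover_concentricSeq hapos hθ₀ hδ hcov

theorem lodim_concentricSeq_mem_Icc (ha : Antitone a) (hθ₀ : 0 ≤ θ) (hθ₁ : θ ≤ 1) :
    lodim θ (concentricSeq (n + 1) a) ∈ Icc (n : ℝ) (n + lodim θ (range a)) := by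
  have hC := shellCoverConst_pos (ι := Fin (n + 1)) (hapos 0).le
  have hδ : ∀ᶠ δ in 𝓝[>] (0 : ℝ), δ ∈ Ioo 0 1 := Ioo_mem_nhdsGT one_pos
  rw [lodim_eq_sInf, lodim_eq_sInf]
  refine le_csInf_and_csInf_le_add ⟨2, zero_le_two, fun ε hε ↦ ?_⟩
    (fun s ⟨hs, h⟩ ↦ ⟨by positivity, fun ε hε ↦ ?_⟩) fun s ⟨_, h⟩ ↦ ?_
  · refine (eventually_hasIntermediateCover_Icc (hapos 0).le hθ₁ hε).frequently.mono
      fun δ hcov ↦ hcov.mono (range_subset_Icc hapos ha)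
  · refine ((h _ (div_pos hε hC)).and_eventually hδ).mono fun δ ⟨hcov, hδ⟩ ↦ ?_
    exact hcov.concentricSeq hapos ha hθ₀ hδ
  · obtain ⟨δ, hcov, hδ⟩ := (h _ (half_pos (pow_pos (hapos 0) n))).and_eventually hδ |>.exists
    exact le_of_hasIntermediateCover_concentricSeq hapos hθ₀ hδ hcov

end ConcentricSpheres

theorem stmt10_general (d : ℕ) (hd : 2 ≤ d) (a : ℕ → ℝ)
    (ha : StrictAnti a) (hapos : ∀ n, 0 < a n) :
    (Tendsto (fun θ : ℝ => updim θ (Set.range a)) (nhdsWithin 0 (Set.Ioi 0)) (nhds 0) →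
      Tendsto (fun θ : ℝ => updim θ (concentricSeq d a)) (nhdsWithin 0 (Set.Ioi 0))
        (nhds ((d : ℝ) - 1))) ∧
    (Tendsto (fun θ : ℝ => lodim θ (Set.range a)) (nhdsWithin 0 (Set.Ioi 0)) (nhds 0) →
      Tendsto (fun θ : ℝ => lodim θ (concentricSeq d a)) (nhdsWithin 0 (Set.Ioi 0))
        (nhds ((d : ℝ) - 1))) := by
  obtain ⟨n, rfl⟩ : ∃ n, d = n + 1 := ⟨d - 1, by omega⟩
  have hθ : ∀ᶠ θ in 𝓝[>] (0 : ℝ), θ ∈ Ioc 0 1 := Ioc_mem_nhdsGT one_pos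
  rw [Nat.cast_succ, add_sub_cancel_right]
  exact ⟨tendsto_of_eventually_mem_Icc_add <| hθ.mono fun θ hθ ↦
      updim_concentricSeq_mem_Icc hapos ha.antitone hθ.1.le hθ.2,
    tendsto_of_eventually_mem_Icc_add <| hθ.mono fun θ hθ ↦
      lodim_concentricSeq_mem_Icc hapos ha.antitone hθ.1.le hθ.2⟩

theorem stmt10 (d : ℕ) (hd : 2 ≤ d) (a : ℕ → ℝ)
    (ha : StrictAnti a) (hapos : ∀ n, 0 < a n) (halim : Tendsto a atTop (nhds 0)) :
    (Tendsto (fun θ : ℝ => updim θ (Set.range a)) (nhdsWithin 0 (Set.Ioi 0)) (nhds 0) →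
      Tendsto (fun θ : ℝ => updim θ (concentricSeq d a)) (nhdsWithin 0 (Set.Ioi 0))
        (nhds ((d : ℝ) - 1))) ∧
    (Tendsto (fun θ : ℝ => lodim θ (Set.range a)) (nhdsWithin 0 (Set.Ioi 0)) (nhds 0) →
      Tendsto (fun θ : ℝ => lodim θ (concentricSeq d a)) (nhdsWithin 0 (Set.Ioi 0))
        (nhds ((d : ℝ) - 1))) :=
  stmt10_general d hd a ha hapos
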